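/- arXiv:1905.13490 — 3 statements merged into one kernel-verified Lean document; each statement's English description precedes it below -/
import Mathlib

section
/- Let Y be a real Hilbert space with norm ‖y‖²_{α,ρ} = ‖Ty‖²_G + α‖E₀y‖²_{H₀} + ρ(‖B₁y‖²_{L₁} + ‖B₂y‖²_{L₂}), ρ > 0, and Λ = L₁ × L₂. Assume: (i) ‖Ty‖_G ≤ C_obs (‖B₁y‖²+‖B₂y‖²+‖E₀y‖²)^{1/2} for all y, and (ii) for every (λ₁,λ₂) ∈ Λ there exists ŷ ∈ Y with B₁ŷ = λ₁, B₂ŷ = λ₂, E₀ŷ = 0. Then for every nonzero λ ∈ Λ, sup_{0≠y∈Y} b(y,λ)/‖y‖_{α,ρ} ≥ ‖λ‖_Λ / √(C_obs² + ρ), where b(y,λ) = ⟨B₁y,λ₁⟩ + ⟨B₂y,λ₂⟩. -/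
open scoped RealInnerProductSpace

/-
The multiplier `λ = (λ₁, λ₂)` is lifted by (ii) to a state `ŷ` with `B₁ ŷ = λ₁`, `B₂ ŷ = λ₂`,
`E₀ ŷ = 0`. Then `b(ŷ, λ) = ‖λ‖²`, and the observation estimate (i) bounds the only remaining
unknown term `‖T ŷ‖²` by `C_obs² ‖λ‖²`, so `‖ŷ‖²_{α,ρ} ≤ (C_obs² + ρ) ‖λ‖²`.
-/

lemma sqrt_div_le_div_of_le_mul_sqrt {s c n : ℝ} (hs : 0 < s) (hn : 0 < n)
    (h : n ≤ c * √s) : √s / c ≤ s / n := by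
  have hsqrt : 0 < √s := Real.sqrt_pos.mpr hs
  have hc : 0 < c := pos_of_mul_pos_left (hn.trans_le h) hsqrt.le
  calc √s / c = s / (c * √s) := by
        field_simp
        exact Real.sq_sqrt hs.le
    _ ≤ s / n := div_le_div_of_nonneg_left hs.le hn h

lemma sq_le_mul_of_le_mul_sqrt {a c s : ℝ} (ha : 0 ≤ a) (hs : 0 ≤ s) (h : a ≤ c * √s) :
    a ^ 2 ≤ c ^ 2 * s := by
  calc a ^ 2 ≤ (c * √s) ^ 2 := pow_le_pow_left₀ ha h 2
    _ = c ^ 2 * s := by rw [mul_pow, Real.sq_sqrt hs]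

lemma norm_sq_add_norm_sq_pos {E F : Type*} [NormedAddCommGroup E] [NormedAddCommGroup F]
    {x : E × F} (hx : x ≠ 0) : 0 < ‖x.1‖ ^ 2 + ‖x.2‖ ^ 2 := by
  obtain ⟨x₁, x₂⟩ := x
  rcases not_and_or.mp (mt Prod.mk_eq_zero.mpr hx) with h | h
  · exact add_pos_of_pos_of_nonneg (by positivity) (by positivity)
  · exact add_pos_of_nonneg_of_pos (by positivity) (by positivity)

theorem stmt6_general {Y G H₀ L₁ L₂ : Type*}
    [NormedAddCommGroup Y] [InnerProductSpace ℝ Y]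
    [NormedAddCommGroup G] [InnerProductSpace ℝ G]
    [NormedAddCommGroup H₀] [InnerProductSpace ℝ H₀]
    [NormedAddCommGroup L₁] [InnerProductSpace ℝ L₁]
    [NormedAddCommGroup L₂] [InnerProductSpace ℝ L₂]
    (T : Y →L[ℝ] G) (E₀ : Y →L[ℝ] H₀) (B₁ : Y →L[ℝ] L₁) (B₂ : Y →L[ℝ] L₂)
    (α ρ C_obs : ℝ) (hρ : 0 < ρ)
    (hobs : ∀ y : Y, ‖T y‖ ≤
      C_obs * Real.sqrt (‖B₁ y‖ ^ 2 + ‖B₂ y‖ ^ 2 + ‖E₀ y‖ ^ 2))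
    (hsolve : ∀ lam : L₁ × L₂, ∃ yhat : Y,
      B₁ yhat = lam.1 ∧ B₂ yhat = lam.2 ∧ E₀ yhat = 0) :
    let N : Y → ℝ := fun y => Real.sqrt (‖T y‖ ^ 2 + α * ‖E₀ y‖ ^ 2 +
      ρ * (‖B₁ y‖ ^ 2 + ‖B₂ y‖ ^ 2))
    ∀ lam : L₁ × L₂, lam ≠ 0 → ∃ y : Y, y ≠ 0 ∧
      (⟪B₁ y, lam.1⟫ + ⟪B₂ y, lam.2⟫) / N y ≥
        Real.sqrt (‖lam.1‖ ^ 2 + ‖lam.2‖ ^ 2) /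
          Real.sqrt (C_obs ^ 2 + ρ) := by
  intro N ⟨lam₁, lam₂⟩ hlam
  obtain ⟨y, rfl, rfl, hE₀⟩ := hsolve (lam₁, lam₂)
  set s := ‖B₁ y‖ ^ 2 + ‖B₂ y‖ ^ 2
  have hs : 0 < s := norm_sq_add_norm_sq_pos hlam
  have hy : y ≠ 0 := by
    rintro rfl
    simp at hlam
  have hb : ⟪B₁ y, B₁ y⟫ + ⟪B₂ y, B₂ y⟫ = s := by
    simp only [real_inner_self_eq_norm_sq, s]
  have hT : ‖T y‖ ^ 2 ≤ C_obs ^ 2 * s :=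
    sq_le_mul_of_le_mul_sqrt (norm_nonneg _) hs.le (by simpa [hE₀] using hobs y)
  have hN : N y = √(‖T y‖ ^ 2 + ρ * s) := by simp [N, hE₀, s]
  have hN_le : N y ≤ √(C_obs ^ 2 + ρ) * √s := by
    rw [hN, ← Real.sqrt_mul (by positivity)]
    exact Real.sqrt_le_sqrt (by linarith)
  have hN_pos : 0 < N y := by
    rw [hN]
    exact Real.sqrt_pos.mpr (by positivity)
  refine ⟨y, hy, ?_⟩
  rw [hb]
  exact sqrt_div_le_div_of_le_mul_sqrt hs hN_pos hN_le

/-- Fourth Brezzi condition (inf-sup): for every nonzero multiplier `λ`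
there is a nonzero `y` with `b(y,λ)/‖y‖_{α,ρ} ≥ ‖λ‖_Λ/√(C_obs² + ρ)`. -/
theorem stmt6 {Y G H₀ L₁ L₂ : Type*}
    [NormedAddCommGroup Y] [InnerProductSpace ℝ Y] [CompleteSpace Y]
    [NormedAddCommGroup G] [InnerProductSpace ℝ G]
    [NormedAddCommGroup H₀] [InnerProductSpace ℝ H₀]
    [NormedAddCommGroup L₁] [InnerProductSpace ℝ L₁]
    [NormedAddCommGroup L₂] [InnerProductSpace ℝ L₂]
    (T : Y →L[ℝ] G) (E₀ : Y →L[ℝ] H₀) (B₁ : Y →L[ℝ] L₁) (B₂ : Y →L[ℝ] L₂)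
    (α ρ C_obs : ℝ) (hα : 0 < α) (hρ : 0 < ρ) (hC : 0 ≤ C_obs)
    (hobs : ∀ y : Y, ‖T y‖ ≤
      C_obs * Real.sqrt (‖B₁ y‖ ^ 2 + ‖B₂ y‖ ^ 2 + ‖E₀ y‖ ^ 2))
    (hsolve : ∀ lam : L₁ × L₂, ∃ yhat : Y,
      B₁ yhat = lam.1 ∧ B₂ yhat = lam.2 ∧ E₀ yhat = 0) :
    let N : Y → ℝ := fun y => Real.sqrt (‖T y‖ ^ 2 + α * ‖E₀ y‖ ^ 2 +
      ρ * (‖B₁ y‖ ^ 2 + ‖B₂ y‖ ^ 2))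
    ∀ lam : L₁ × L₂, lam ≠ 0 → ∃ y : Y, y ≠ 0 ∧
      (⟪B₁ y, lam.1⟫ + ⟪B₂ y, lam.2⟫) / N y ≥
        Real.sqrt (‖lam.1‖ ^ 2 + ‖lam.2‖ ^ 2) /
          Real.sqrt (C_obs ^ 2 + ρ) :=
  stmt6_general T E₀ B₁ B₂ α ρ C_obs hρ hobs hsolve
end

section
/- Let Y, Λ be real Hilbert spaces, b : Y×Λ → ℝ a bounded bilinear form satisfying the inf-sup condition with constant k₀ with respect to the norm ‖·‖_{α,ρ} on Y. Let Y_h ⊆ Y be a closed subspace, and suppose Λ_h := {(B₁ y_h, B₂ y_h) : y_h ∈ Y_h, E₀ y_h = 0} ⊆ Λ (where b(y,λ) = ⟨B₁y,λ₁⟩ + ⟨B₂y,λ₂⟩ and ‖Ty‖ ≤ C_obs(‖B₁y‖²+‖B₂y‖²+‖E₀y‖²)^{1/2}). Then the restricted form b on Y_h × Λ_h satisfies the discrete inf-sup condition sup_{0≠y_h∈Y_h} b(y_h,λ_h)/‖y_h‖_{α,ρ} ≥ ‖λ_h‖_Λ / √(C_obs²+ρ) for all λ_h ∈ Λ_h.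 -/
open scoped RealInnerProductSpace

/-!
The element `y_h` defining `λ_h = (B₁ y_h, B₂ y_h)` is itself a supremizer: it gives
`b(y_h, λ_h) = ‖λ_h‖²`, while `E₀ y_h = 0` and the observability bound give
`‖y_h‖²_{α,ρ} ≤ (C_obs² + ρ) ‖λ_h‖²`. Since `y_h ∈ Y_h`, the continuous argument works verbatim.
-/

lemma Real.sqrt_sq_add_mul_le {a t C ρ : ℝ} (ha : 0 ≤ a) (hρ : 0 ≤ ρ) (ht : 0 ≤ t)
    (htC : t ≤ C * √a) : √(t ^ 2 + ρ * a) ≤ √(C ^ 2 + ρ) * √a := by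
  have ht2 : t ^ 2 ≤ C ^ 2 * a := by
    simpa [mul_pow, Real.sq_sqrt ha] using pow_le_pow_left₀ ht htC 2
  rw [← Real.sqrt_mul (by positivity)]
  exact Real.sqrt_le_sqrt (by nlinarith)

lemma Real.sqrt_div_le_div_sqrt_sq_add_mul {a t C ρ : ℝ} (ha : 0 ≤ a) (hρ : 0 < ρ)
    (ht : 0 ≤ t) (htC : t ≤ C * √a) : √a / √(C ^ 2 + ρ) ≤ a / √(t ^ 2 + ρ * a) := by
  rcases ha.eq_or_lt with rfl | ha
  · simp
  have hN : 0 < √(t ^ 2 + ρ * a) := Real.sqrt_pos.mpr (by positivity)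
  calc √a / √(C ^ 2 + ρ) = a / (√(C ^ 2 + ρ) * √a) := by
        rw [mul_comm, ← div_div, Real.div_sqrt]
    _ ≤ a / √(t ^ 2 + ρ * a) :=
        div_le_div_of_nonneg_left ha.le hN (Real.sqrt_sq_add_mul_le ha.le hρ.le ht htC)

lemma sqrt_norm_sq_div_le_inner_div {Y G H₀ L₁ L₂ : Type*}
    [NormedAddCommGroup Y] [InnerProductSpace ℝ Y]
    [NormedAddCommGroup G] [InnerProductSpace ℝ G]
    [NormedAddCommGroup H₀] [InnerProductSpace ℝ H₀]
    [NormedAddCommGroup L₁] [InnerProductSpace ℝ L₁]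
    [NormedAddCommGroup L₂] [InnerProductSpace ℝ L₂]
    (T : Y →L[ℝ] G) (E₀ : Y →L[ℝ] H₀) (B₁ : Y →L[ℝ] L₁) (B₂ : Y →L[ℝ] L₂)
    {α ρ C_obs : ℝ} (hρ : 0 < ρ)
    (hobs : ∀ y : Y, ‖T y‖ ≤ C_obs * √(‖B₁ y‖ ^ 2 + ‖B₂ y‖ ^ 2 + ‖E₀ y‖ ^ 2))
    {y : Y} (hy : E₀ y = 0) :
    √(‖B₁ y‖ ^ 2 + ‖B₂ y‖ ^ 2) / √(C_obs ^ 2 + ρ) ≤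
      (⟪B₁ y, B₁ y⟫ + ⟪B₂ y, B₂ y⟫) /
        √(‖T y‖ ^ 2 + α * ‖E₀ y‖ ^ 2 + ρ * (‖B₁ y‖ ^ 2 + ‖B₂ y‖ ^ 2)) := by
  have hT := hobs y
  simp only [hy, norm_zero, zero_pow two_ne_zero, mul_zero, add_zero] at hT ⊢
  simpa only [real_inner_self_eq_norm_sq] using
    Real.sqrt_div_le_div_sqrt_sq_add_mul (by positivity) hρ (norm_nonneg _) hT

theorem stmt10_general {Y G H₀ L₁ L₂ : Type*}
    [NormedAddCommGroup Y] [InnerProductSpace ℝ Y]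
    [NormedAddCommGroup G] [InnerProductSpace ℝ G]
    [NormedAddCommGroup H₀] [InnerProductSpace ℝ H₀]
    [NormedAddCommGroup L₁] [InnerProductSpace ℝ L₁]
    [NormedAddCommGroup L₂] [InnerProductSpace ℝ L₂]
    (T : Y →L[ℝ] G) (E₀ : Y →L[ℝ] H₀) (B₁ : Y →L[ℝ] L₁) (B₂ : Y →L[ℝ] L₂)
    (α ρ C_obs : ℝ) (hρ : 0 < ρ)
    (hobs : ∀ y : Y, ‖T y‖ ≤
      C_obs * Real.sqrt (‖B₁ y‖ ^ 2 + ‖B₂ y‖ ^ 2 + ‖E₀ y‖ ^ 2))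
    (Yh : Submodule ℝ Y) :
    let N : Y → ℝ := fun y => Real.sqrt (‖T y‖ ^ 2 + α * ‖E₀ y‖ ^ 2 +
      ρ * (‖B₁ y‖ ^ 2 + ‖B₂ y‖ ^ 2))
    ∀ lam : L₁ × L₂,
      (∃ yh ∈ Yh, E₀ yh = 0 ∧ lam = (B₁ yh, B₂ yh)) →
      lam ≠ 0 →
      ∃ y ∈ Yh, y ≠ 0 ∧
        (⟪B₁ y, lam.1⟫ + ⟪B₂ y, lam.2⟫) / N y ≥
          Real.sqrt (‖lam.1‖ ^ 2 + ‖lam.2‖ ^ 2) /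
            Real.sqrt (C_obs ^ 2 + ρ) := by
  rintro N lam ⟨yh, hyh, hE₀, rfl⟩ hne
  refine ⟨yh, hyh, ?_, sqrt_norm_sq_div_le_inner_div T E₀ B₁ B₂ hρ hobs hE₀⟩
  rintro rfl
  simp at hne

/-- Discrete inf-sup condition: for a conforming subspace `Y_h` and the
multiplier space `Λ_h = {(B₁ y_h, B₂ y_h) : y_h ∈ Y_h, E₀ y_h = 0}`, the
constraint form `b` satisfies the inf-sup condition on `Y_h × Λ_h` with the
same constant `k₀ = 1/√(C_obs² + ρ)` as in the continuous setting. -/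
theorem stmt10 {Y G H₀ L₁ L₂ : Type*}
    [NormedAddCommGroup Y] [InnerProductSpace ℝ Y] [CompleteSpace Y]
    [NormedAddCommGroup G] [InnerProductSpace ℝ G]
    [NormedAddCommGroup H₀] [InnerProductSpace ℝ H₀]
    [NormedAddCommGroup L₁] [InnerProductSpace ℝ L₁]
    [NormedAddCommGroup L₂] [InnerProductSpace ℝ L₂]
    (T : Y →L[ℝ] G) (E₀ : Y →L[ℝ] H₀) (B₁ : Y →L[ℝ] L₁) (B₂ : Y →L[ℝ] L₂)
    (α ρ C_obs : ℝ) (hα : 0 < α) (hρ : 0 < ρ) (hC : 0 ≤ C_obs)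
    (hobs : ∀ y : Y, ‖T y‖ ≤
      C_obs * Real.sqrt (‖B₁ y‖ ^ 2 + ‖B₂ y‖ ^ 2 + ‖E₀ y‖ ^ 2))
    (Yh : Submodule ℝ Y) (hYh : IsClosed (Yh : Set Y)) :
    let N : Y → ℝ := fun y => Real.sqrt (‖T y‖ ^ 2 + α * ‖E₀ y‖ ^ 2 +
      ρ * (‖B₁ y‖ ^ 2 + ‖B₂ y‖ ^ 2))
    ∀ lam : L₁ × L₂,
      (∃ yh ∈ Yh, E₀ yh = 0 ∧ lam = (B₁ yh, B₂ yh)) →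
      lam ≠ 0 →
      ∃ y ∈ Yh, y ≠ 0 ∧
        (⟪B₁ y, lam.1⟫ + ⟪B₂ y, lam.2⟫) / N y ≥
          Real.sqrt (‖lam.1‖ ^ 2 + ‖lam.2‖ ^ 2) /
            Real.sqrt (C_obs ^ 2 + ρ) :=
  stmt10_general T E₀ B₁ B₂ α ρ C_obs hρ hobs Yh
end

section
/- Let X be a real Hilbert space, A : X → X' bounded, self-adjoint, boundedly invertible, and X_h ⊆ X a closed subspace such that the restricted operator A_h : X_h → X_h' (defined by ⟨A_h x_h, w_h⟩ = ⟨A x_h, w_h⟩) satisfies ‖A_h‖ ≤ c̄ and ‖A_h⁻¹‖ ≤ 1/c̲ with constants independent of the choice of X_h. Let P_h : X_h → X_h' be the Riesz map of X_h with the inherited inner product. Then P_h⁻¹A_h : X_h → X_h is a self-adjoint isomorphism and its condition number κ(P_h⁻¹A_h) = ‖A_h‖·‖A_h⁻¹‖ ≤ c̄/c̲ is bounded independently of X_h. -/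
open scoped RealInnerProductSpace

section BoundsFromInner

variable {E : Type*} [NormedAddCommGroup E] [InnerProductSpace ℝ E]

theorem ContinuousLinearMap.norm_apply_le_of_abs_inner_le (T : E →L[ℝ] E) {C : ℝ} (hC : 0 ≤ C)
    (h : ∀ x w, |⟪T x, w⟫| ≤ C * ‖x‖ * ‖w‖) (x : E) : ‖T x‖ ≤ C * ‖x‖ := by
  rcases (norm_nonneg (T x)).eq_or_lt with hTx | hTx
  · rw [← hTx]
    exact mul_nonneg hC (norm_nonneg x)
  · refine le_of_mul_le_mul_right ?_ hTx
    calc ‖T x‖ * ‖T x‖ = ⟪T x, T x⟫ := (real_inner_self_eq_norm_mul_norm _).symm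
      _ ≤ |⟪T x, T x⟫| := le_abs_self _
      _ ≤ C * ‖x‖ * ‖T x‖ := h x (T x)

theorem ContinuousLinearMap.opNorm_le_of_abs_inner_le (T : E →L[ℝ] E) {C : ℝ} (hC : 0 ≤ C)
    (h : ∀ x w, |⟪T x, w⟫| ≤ C * ‖x‖ * ‖w‖) : ‖T‖ ≤ C :=
  T.opNorm_le_bound hC (T.norm_apply_le_of_abs_inner_le hC h)

theorem ContinuousLinearMap.mul_norm_le_norm_apply_of_inf_sup (T : E →L[ℝ] E) {c : ℝ}
    (h : ∀ x, ∃ w, ‖w‖ ≤ 1 ∧ c * ‖x‖ ≤ ⟪T x, w⟫) (x : E) : c * ‖x‖ ≤ ‖T x‖ := by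
  obtain ⟨w, hw, hcx⟩ := h x
  calc c * ‖x‖ ≤ ⟪T x, w⟫ := hcx
    _ ≤ ‖T x‖ * ‖w‖ := real_inner_le_norm _ _
    _ ≤ ‖T x‖ := mul_le_of_le_one_right (norm_nonneg _) hw

end BoundsFromInner

theorem ContinuousLinearMap.antilipschitzWith_of_mul_norm_le {𝕜 E F : Type*}
    [NontriviallyNormedField 𝕜] [NormedAddCommGroup E] [NormedSpace 𝕜 E]
    [NormedAddCommGroup F] [NormedSpace 𝕜 F] (T : E →L[𝕜] F) {c : ℝ} (hc : 0 < c)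
    (h : ∀ x, c * ‖x‖ ≤ ‖T x‖) : AntilipschitzWith ⟨c⁻¹, inv_nonneg.mpr hc.le⟩ T :=
  T.antilipschitz_of_bound fun x => by
    show ‖x‖ ≤ c⁻¹ * ‖T x‖
    rw [← div_eq_inv_mul, le_div_iff₀' hc]
    exact h x

theorem ContinuousLinearEquiv.norm_symm_le_of_mul_norm_le {𝕜 E F : Type*}
    [NontriviallyNormedField 𝕜] [NormedAddCommGroup E] [NormedSpace 𝕜 E]
    [NormedAddCommGroup F] [NormedSpace 𝕜 F] (e : E ≃L[𝕜] F) {c : ℝ} (hc : 0 < c)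
    (h : ∀ x, c * ‖x‖ ≤ ‖e x‖) : ‖(e.symm : F →L[𝕜] E)‖ ≤ 1 / c :=
  ContinuousLinearMap.opNorm_le_bound _ (one_div_nonneg.mpr hc.le) fun y => by
    simpa only [coe_coe, apply_symm_apply, one_div, ← div_eq_inv_mul, le_div_iff₀' hc]
      using h (e.symm y)

/-- A symmetric operator on a Hilbert space that is bounded below is invertible: it is injective
with closed range, and its range is dense because `(range T)ᗮ = ker T = ⊥`. -/
theorem LinearMap.IsSymmetric.bijective_of_mul_norm_le {𝕜 E : Type*} [RCLike 𝕜]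
    [NormedAddCommGroup E] [InnerProductSpace 𝕜 E] [CompleteSpace E] {T : E →L[𝕜] E}
    (hT : (T : E →ₗ[𝕜] E).IsSymmetric) {c : ℝ} (hc : 0 < c) (h : ∀ x, c * ‖x‖ ≤ ‖T x‖) :
    Function.Bijective T := by
  have hanti := T.antilipschitzWith_of_mul_norm_le hc h
  have hker : LinearMap.ker (T : E →ₗ[𝕜] E) = ⊥ := LinearMap.ker_eq_bot.mpr hanti.injective
  have hdense : (LinearMap.range (T : E →ₗ[𝕜] E)).topologicalClosure = ⊤ :=
    Submodule.topologicalClosure_eq_top_iff.mpr (hT.orthogonal_range.trans hker)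
  rw [(hanti.isClosed_range T.uniformContinuous).submodule_topologicalClosure_eq] at hdense
  exact ⟨hanti.injective, LinearMap.range_eq_top.mp hdense⟩

/-- Discrete operator preconditioning: if the restriction `A_h` of a bounded
self-adjoint operator `A : X → X'` to a closed subspace `X_h` satisfies
`‖A_h‖ ≤ c̄` and is invertible with `‖A_h⁻¹‖ ≤ 1/c̲`, then the
Riesz-preconditioned operator `P_h⁻¹A_h : X_h → X_h` (characterized by
`⟪P_h⁻¹A_h x, w⟫ = ⟨A x, w⟩` for `x, w ∈ X_h`) is a self-adjoint isomorphism
with condition number `‖P_h⁻¹A_h‖·‖(P_h⁻¹A_h)⁻¹‖ ≤ c̄/c̲`. -/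
theorem stmt11 {X : Type*}
    [NormedAddCommGroup X] [InnerProductSpace ℝ X] [CompleteSpace X]
    (A : X →L[ℝ] StrongDual ℝ X)
    (hsym : ∀ x w : X, A x w = A w x)
    (Xh : Submodule ℝ X) (hXh : IsClosed (Xh : Set X))
    (cbar cund : ℝ) (hcbar : 0 < cbar) (hcund : 0 < cund)
    (hAh_bdd : ∀ x w : Xh, |A (x : X) (w : X)| ≤ cbar * ‖x‖ * ‖w‖)
    (hAh_inv : ∀ x : Xh, ∃ w : Xh, ‖w‖ ≤ 1 ∧ cund * ‖x‖ ≤ A (x : X) (w : X)) :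
    ∃ M Minv : Xh →L[ℝ] Xh,
      (∀ x w : Xh, ⟪M x, w⟫ = A (x : X) (w : X)) ∧
      (∀ x w : Xh, ⟪M x, w⟫ = ⟪x, M w⟫) ∧
      Function.Bijective M ∧
      (∀ x : Xh, Minv (M x) = x) ∧ (∀ x : Xh, M (Minv x) = x) ∧
      ‖M‖ ≤ cbar ∧ ‖Minv‖ ≤ 1 / cund ∧
      ‖M‖ * ‖Minv‖ ≤ cbar / cund := by
  have : CompleteSpace Xh := hXh.completeSpace_coe
  -- `M = P_h⁻¹ A_h`: the Riesz representative in `Xh` of `A` restricted to `Xh × Xh`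
  set M : Xh →L[ℝ] Xh := InnerProductSpace.continuousLinearMapOfBilin (𝕜 := ℝ)
    (A.bilinearComp Xh.subtypeL Xh.subtypeL)
  have hM : ∀ x w : Xh, ⟪M x, w⟫ = A (x : X) (w : X) := fun x w =>
    InnerProductSpace.continuousLinearMapOfBilin_apply _ x w
  have hMsymm : ∀ x w : Xh, ⟪M x, w⟫ = ⟪x, M w⟫ := fun x w => by
    rw [hM, real_inner_comm, hM, hsym]
  have hbelow := M.mul_norm_le_norm_apply_of_inf_sup (by simpa only [hM] using hAh_inv)
  have hbij : Function.Bijective M :=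
    LinearMap.IsSymmetric.bijective_of_mul_norm_le hMsymm hcund hbelow
  set e := ContinuousLinearEquiv.ofBijective M
    (LinearMap.ker_eq_bot.mpr hbij.1) (LinearMap.range_eq_top.mpr hbij.2)
  have hMnorm : ‖M‖ ≤ cbar :=
    M.opNorm_le_of_abs_inner_le hcbar.le (by simpa only [hM] using hAh_bdd)
  have hMinv : ‖(e.symm : Xh →L[ℝ] Xh)‖ ≤ 1 / cund := e.norm_symm_le_of_mul_norm_le hcund hbelow
  refine ⟨M, e.symm, hM, hMsymm, hbij, e.symm_apply_apply, e.apply_symm_apply, hMnorm, hMinv, ?_⟩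
  calc ‖M‖ * ‖(e.symm : Xh →L[ℝ] Xh)‖ ≤ cbar * (1 / cund) :=
        mul_le_mul hMnorm hMinv (norm_nonneg _) hcbar.le
    _ = cbar / cund := mul_one_div _ _
end
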